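/- The canonical ring homomorphism R[τ,τ⁻¹] → R^perf[τ,τ⁻¹], induced by the canonical map R → R^perf (and sending τ to τ and σ to σ), is bijective, i.e. an isomorphism of rings. -/

import Mathlib

/-! Construction of the twisted Laurent polynomial ring `R[τ,τ⁻¹]` as the quotient of the free
noncommutative `𝔽`-algebra on the set `R ⊔ {τ, σ}` by the relations making the canonical map
`R → R[τ,τ⁻¹]` an `𝔽`-algebra homomorphism, together with `τ·a = a^q·τ`, `σ·a^q = a·σ` and
`τσ = στ = 1` for all `a ∈ R`. -/

namespace TwistedLaurent

/-- Generators: the elements of `R`, and the two formal variables `τ` and `σ`. -/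
inductive Gen (R : Type) : Type
  | base : R → Gen R
  | tau : Gen R
  | sigma : Gen R

/-- The defining relations of `R[τ,τ⁻¹]`. -/
inductive Rel (q : ℕ) (𝔽 R : Type) [Field 𝔽] [CommRing R] [Algebra 𝔽 R] :
    FreeAlgebra 𝔽 (Gen R) → FreeAlgebra 𝔽 (Gen R) → Prop
  | add (a b : R) : Rel q 𝔽 R (FreeAlgebra.ι 𝔽 (Gen.base (a + b)))
      (FreeAlgebra.ι 𝔽 (Gen.base a) + FreeAlgebra.ι 𝔽 (Gen.base b))
  | mul (a b : R) : Rel q 𝔽 R (FreeAlgebra.ι 𝔽 (Gen.base (a * b)))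
      (FreeAlgebra.ι 𝔽 (Gen.base a) * FreeAlgebra.ι 𝔽 (Gen.base b))
  | algebra (c : 𝔽) : Rel q 𝔽 R (FreeAlgebra.ι 𝔽 (Gen.base (algebraMap 𝔽 R c)))
      (algebraMap 𝔽 (FreeAlgebra 𝔽 (Gen R)) c)
  | tau_comm (a : R) : Rel q 𝔽 R (FreeAlgebra.ι 𝔽 Gen.tau * FreeAlgebra.ι 𝔽 (Gen.base a))
      (FreeAlgebra.ι 𝔽 (Gen.base (a ^ q)) * FreeAlgebra.ι 𝔽 Gen.tau)
  | sigma_comm (a : R) : Rel q 𝔽 R (FreeAlgebra.ι 𝔽 Gen.sigma * FreeAlgebra.ι 𝔽 (Gen.base (a ^ q)))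
      (FreeAlgebra.ι 𝔽 (Gen.base a) * FreeAlgebra.ι 𝔽 Gen.sigma)
  | tau_sigma : Rel q 𝔽 R (FreeAlgebra.ι 𝔽 Gen.tau * FreeAlgebra.ι 𝔽 Gen.sigma) 1
  | sigma_tau : Rel q 𝔽 R (FreeAlgebra.ι 𝔽 Gen.sigma * FreeAlgebra.ι 𝔽 Gen.tau) 1

variable (q : ℕ) (𝔽 R : Type) [Field 𝔽] [CommRing R] [Algebra 𝔽 R]

/-- The twisted Laurent polynomial ring `R[τ,τ⁻¹]`. -/
def Ring' : Type := RingQuot (Rel q 𝔽 R)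

noncomputable instance : Ring (Ring' q 𝔽 R) :=
  inferInstanceAs (Ring (RingQuot (Rel q 𝔽 R)))

/-- The canonical map `R → R[τ,τ⁻¹]`. -/
noncomputable def ι : R → Ring' q 𝔽 R :=
  fun a => RingQuot.mkAlgHom 𝔽 (Rel q 𝔽 R) (FreeAlgebra.ι 𝔽 (Gen.base a))

/-- The element `τ` of `R[τ,τ⁻¹]`. -/
noncomputable def T : Ring' q 𝔽 R :=
  RingQuot.mkAlgHom 𝔽 (Rel q 𝔽 R) (FreeAlgebra.ι 𝔽 Gen.tau)

/-- The element `σ` of `R[τ,τ⁻¹]`. -/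
noncomputable def S : Ring' q 𝔽 R :=
  RingQuot.mkAlgHom 𝔽 (Rel q 𝔽 R) (FreeAlgebra.ι 𝔽 Gen.sigma)

end TwistedLaurent

/-! The element `τ` is a unit of `R[τ,τ⁻¹]` with inverse `σ`, so `x ↦ σⁿ x τⁿ` is a ring
endomorphism, and `σ a^q τ = a` shows that `a ↦ σⁿ a τⁿ` behaves like `a ↦ a^{1/qⁿ}`. Since
`q = p^(d+1)`, the maps `x ↦ σⁿ x^(p^(dn)) τⁿ` are compatible with the colimit defining the perfect
closure (in which `mk (n, x)` stands for `x^{1/pⁿ}`), hence induce `R^perf → R[τ,τ⁻¹]` extending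
`ι`. Together with `τ` and `σ` it satisfies the defining relations of `R^perf[τ,τ⁻¹]`, and the
resulting map is inverse to the canonical one because both composites fix the generators. -/

namespace PerfectClosure

variable {K : Type*} [CommRing K] {p : ℕ} [Fact p.Prime] [CharP K p]

theorem mk_pow_pow_self (n : ℕ) (x : K) : mk K p (n, x) ^ p ^ n = of K p x := by
  rw [← iterate_frobenius, iterate_frobenius_mk]

section LiftOfCompatible

variable {A : Type*} [Semiring A] (g : ℕ → K →+* A) (hg : ∀ n x, g (n + 1) (x ^ p) = g n x)
include hg

theorem compatible_iterate_frobenius (n m : ℕ) (x : K) :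
    g (n + m) ((frobenius K p)^[m] x) = g n x := by
  induction m with
  | zero => rfl
  | succ m ih => rw [Function.iterate_succ_apply', frobenius_def, ← add_assoc, hg, ih]

noncomputable def liftOfCompatible : PerfectClosure K p →+* A where
  toFun u := u.liftOn (fun nx => g nx.1 nx.2) fun _ _ ⟨n, x⟩ => (hg n x).symm
  map_one' := map_one (g 0)
  map_zero' := map_zero (g 0)
  map_mul' u v := by
    obtain ⟨⟨n, x⟩, rfl⟩ := mk_surjective K p u
    obtain ⟨⟨m, y⟩, rfl⟩ := mk_surjective K p v
    rw [mk_mul_mk, liftOn_mk, liftOn_mk, liftOn_mk, map_mul,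
      compatible_iterate_frobenius g hg, add_comm n, compatible_iterate_frobenius g hg]
  map_add' u v := by
    obtain ⟨⟨n, x⟩, rfl⟩ := mk_surjective K p u
    obtain ⟨⟨m, y⟩, rfl⟩ := mk_surjective K p v
    rw [mk_add_mk, liftOn_mk, liftOn_mk, liftOn_mk, map_add,
      compatible_iterate_frobenius g hg, add_comm n, compatible_iterate_frobenius g hg]

theorem liftOfCompatible_mk (n : ℕ) (x : K) : liftOfCompatible g hg (mk K p (n, x)) = g n x :=
  rfl

end LiftOfCompatible

section Algebra

variable {S : Type*} [CommSemiring S] [Algebra S K]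

noncomputable instance instAlgebra : Algebra S (PerfectClosure K p) :=
  ((of K p).comp (algebraMap S K)).toAlgebra

variable (K p) in
noncomputable def ofAlgHom : K →ₐ[S] PerfectClosure K p :=
  { of K p with commutes' := fun _ => rfl }

@[simp]
theorem ofAlgHom_apply (a : K) : ofAlgHom K p (S := S) a = of K p a := rfl

end Algebra

end PerfectClosure

namespace TwistedLaurent

variable {q : ℕ} {𝔽 R : Type} [Field 𝔽] [CommRing R] [Algebra 𝔽 R]

noncomputable instance : Algebra 𝔽 (Ring' q 𝔽 R) :=
  inferInstanceAs (Algebra 𝔽 (RingQuot (Rel q 𝔽 R)))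

theorem ι_algebraMap (c : 𝔽) : ι q 𝔽 R (algebraMap 𝔽 R c) = algebraMap 𝔽 (Ring' q 𝔽 R) c :=
  (RingQuot.mkAlgHom_rel 𝔽 (Rel.algebra c)).trans ((RingQuot.mkAlgHom 𝔽 _).commutes c)

variable (q 𝔽 R) in
noncomputable def ιAlgHom : R →ₐ[𝔽] Ring' q 𝔽 R where
  toFun := ι q 𝔽 R
  map_one' := by simpa using ι_algebraMap (q := q) (R := R) (1 : 𝔽)
  map_mul' a b := (RingQuot.mkAlgHom_rel 𝔽 (Rel.mul a b)).trans (map_mul _ _ _)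
  map_zero' := by simpa using ι_algebraMap (q := q) (R := R) (0 : 𝔽)
  map_add' a b := (RingQuot.mkAlgHom_rel 𝔽 (Rel.add a b)).trans (map_add _ _ _)
  commutes' := ι_algebraMap

@[simp]
theorem ιAlgHom_apply (a : R) : ιAlgHom q 𝔽 R a = ι q 𝔽 R a := rfl

theorem T_mul_ι (a : R) : T q 𝔽 R * ι q 𝔽 R a = ι q 𝔽 R (a ^ q) * T q 𝔽 R :=
  (map_mul _ _ _).symm.trans <|
    (RingQuot.mkAlgHom_rel 𝔽 (Rel.tau_comm a)).trans (map_mul _ _ _)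

variable (q 𝔽 R) in
noncomputable abbrev unitT : (Ring' q 𝔽 R)ˣ where
  val := T q 𝔽 R
  inv := S q 𝔽 R
  val_inv := (map_mul _ _ _).symm.trans <|
    (RingQuot.mkAlgHom_rel 𝔽 Rel.tau_sigma).trans (map_one _)
  inv_val := (map_mul _ _ _).symm.trans <|
    (RingQuot.mkAlgHom_rel 𝔽 Rel.sigma_tau).trans (map_one _)

@[simp]
theorem val_inv_unitT : ((unitT q 𝔽 R)⁻¹ : (Ring' q 𝔽 R)ˣ) = S q 𝔽 R := rfl

theorem T_mul_S : T q 𝔽 R * S q 𝔽 R = 1 := (unitT q 𝔽 R).mul_inv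

theorem S_mul_T : S q 𝔽 R * T q 𝔽 R = 1 := (unitT q 𝔽 R).inv_mul

section Lift

variable {A : Type*} [Ring A] [Algebra 𝔽 A]

theorem algHom_ext {φ ψ : Ring' q 𝔽 R →ₐ[𝔽] A} (hι : ∀ a, φ (ι q 𝔽 R a) = ψ (ι q 𝔽 R a))
    (hT : φ (T q 𝔽 R) = ψ (T q 𝔽 R)) : φ = ψ := by
  have hS : φ (S q 𝔽 R) = ψ (S q 𝔽 R) :=
    left_inv_eq_right_inv (a := φ (T q 𝔽 R))
      (by rw [← map_mul, S_mul_T, map_one]) (by rw [hT, ← map_mul, T_mul_S, map_one])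
  exact RingQuot.ringQuot_ext' 𝔽 _ _ <| FreeAlgebra.hom_ext <| funext fun
    | .base a => hι a
    | .tau => hT
    | .sigma => hS

noncomputable def lift (f : R →ₐ[𝔽] A) (t : Aˣ) (ht : ∀ a, t * f a = f (a ^ q) * t) :
    Ring' q 𝔽 R →ₐ[𝔽] A :=
  RingQuot.liftAlgHom 𝔽 ⟨FreeAlgebra.lift 𝔽 fun
    | .base a => f a
    | .tau => ↑t
    | .sigma => ↑t⁻¹, by
      rintro _ _ (_ | _ | _ | _ | _ | _ | _) <;>
        simp only [map_add, map_mul, map_one, AlgHom.commutes, FreeAlgebra.lift_ι_apply]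
      · exact ht _
      · exact SemiconjBy.units_inv_symm_left (ht _)
      · exact t.mul_inv
      · exact t.inv_mul⟩

variable (f : R →ₐ[𝔽] A) (t : Aˣ) (ht : ∀ a, t * f a = f (a ^ q) * t)

@[simp]
theorem lift_ι (a : R) : lift f t ht (ι q 𝔽 R a) = f a :=
  (RingQuot.liftAlgHom_mkAlgHom_apply _ _ _ _).trans (FreeAlgebra.lift_ι_apply _ _)

@[simp]
theorem lift_T : lift f t ht (T q 𝔽 R) = t :=
  (RingQuot.liftAlgHom_mkAlgHom_apply _ _ _ _).trans (FreeAlgebra.lift_ι_apply _ _)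

@[simp]
theorem lift_S : lift f t ht (S q 𝔽 R) = ↑t⁻¹ :=
  (RingQuot.liftAlgHom_mkAlgHom_apply _ _ _ _).trans (FreeAlgebra.lift_ι_apply _ _)

end Lift

section Map

variable {R' : Type} [CommRing R'] [Algebra 𝔽 R']

noncomputable def map (f : R →ₐ[𝔽] R') : Ring' q 𝔽 R →ₐ[𝔽] Ring' q 𝔽 R' :=
  lift ((ιAlgHom q 𝔽 R').comp f) (unitT q 𝔽 R') fun a => by simp [T_mul_ι]

variable (f : R →ₐ[𝔽] R')

@[simp]
theorem map_ι (a : R) : map f (ι q 𝔽 R a) = ι q 𝔽 R' (f a) := lift_ι _ _ _ a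

@[simp]
theorem map_T : map f (T q 𝔽 R) = T q 𝔽 R' := lift_T _ _ _

@[simp]
theorem map_S : map f (S q 𝔽 R) = S q 𝔽 R' := lift_S _ _ _

end Map

variable (q 𝔽 R) in
noncomputable def conjι (n : ℕ) : R →+* Ring' q 𝔽 R :=
  (MulSemiringAction.toRingHom (ConjAct (Ring' q 𝔽 R)ˣ) _
    (ConjAct.toConjAct (unitT q 𝔽 R ^ n)⁻¹)).comp (ιAlgHom q 𝔽 R).toRingHom

theorem conjι_apply (n : ℕ) (a : R) :
    conjι q 𝔽 R n a = S q 𝔽 R ^ n * ι q 𝔽 R a * T q 𝔽 R ^ n := by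
  simp [conjι, ConjAct.units_smul_def]

theorem conjι_zero (a : R) : conjι q 𝔽 R 0 a = ι q 𝔽 R a := by
  simp [conjι_apply]

theorem conjι_succ_pow (n : ℕ) (a : R) : conjι q 𝔽 R (n + 1) (a ^ q) = conjι q 𝔽 R n a := by
  rw [conjι_apply, conjι_apply, pow_succ, pow_succ']
  calc S q 𝔽 R ^ n * S q 𝔽 R * ι q 𝔽 R (a ^ q) * (T q 𝔽 R * T q 𝔽 R ^ n)
      = S q 𝔽 R ^ n * (S q 𝔽 R * (ι q 𝔽 R (a ^ q) * T q 𝔽 R)) * T q 𝔽 R ^ n := by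
        simp only [mul_assoc]
    _ = S q 𝔽 R ^ n * ι q 𝔽 R a * T q 𝔽 R ^ n := by
        rw [← T_mul_ι, ← mul_assoc (S q 𝔽 R), S_mul_T, one_mul]

theorem conjι_add_pow_pow (n k : ℕ) (a : R) :
    conjι q 𝔽 R (n + k) (a ^ q ^ k) = conjι q 𝔽 R n a := by
  induction k with
  | zero => simp
  | succ k ih => rw [← add_assoc, pow_succ, pow_mul, conjι_succ_pow, ih]

theorem conjι_pow_pow_self (n : ℕ) (a : R) : conjι q 𝔽 R n (a ^ q ^ n) = ι q 𝔽 R a := by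
  simpa [conjι_zero] using conjι_add_pow_pow (q := q) (𝔽 := 𝔽) 0 n a

theorem T_mul_conjι (n : ℕ) (a : R) :
    T q 𝔽 R * conjι q 𝔽 R n a = conjι q 𝔽 R n a ^ q * T q 𝔽 R := by
  have hTS : Commute (T q 𝔽 R) (S q 𝔽 R ^ n) :=
    Commute.pow_right (T_mul_S.trans S_mul_T.symm) n
  calc T q 𝔽 R * conjι q 𝔽 R n a
      = S q 𝔽 R ^ n * (T q 𝔽 R * ι q 𝔽 R a) * T q 𝔽 R ^ n := by
        rw [conjι_apply, ← mul_assoc, ← mul_assoc, hTS.eq, mul_assoc _ (T q 𝔽 R)]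
    _ = S q 𝔽 R ^ n * ι q 𝔽 R (a ^ q) * T q 𝔽 R ^ n * T q 𝔽 R := by
        rw [T_mul_ι]
        simp only [mul_assoc, ← pow_succ', pow_succ]
    _ = conjι q 𝔽 R n a ^ q * T q 𝔽 R := by rw [← conjι_apply, map_pow]

theorem map_conjι {R' : Type} [CommRing R'] [Algebra 𝔽 R'] (f : R →ₐ[𝔽] R') (n : ℕ) (a : R) :
    map f (conjι q 𝔽 R n a) = conjι q 𝔽 R' n (f a) := by
  simp [conjι_apply]

theorem conjι_iterateFrobenius_compatible (p d n : ℕ) (x : R) :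
    conjι (p ^ (d + 1)) 𝔽 R (n + 1) ((x ^ p) ^ p ^ (d * (n + 1))) =
      conjι (p ^ (d + 1)) 𝔽 R n (x ^ p ^ (d * n)) := by
  rw [← conjι_succ_pow _ (x ^ p ^ (d * n)), ← pow_mul, ← pow_mul, ← pow_succ', ← pow_add]
  ring_nf

section PerfectClosure

variable (p d : ℕ) [Fact p.Prime] [CharP R p]

open PerfectClosure

variable (𝔽 R) in
noncomputable def ofPerfectClosure : PerfectClosure R p →ₐ[𝔽] Ring' (p ^ (d + 1)) 𝔽 R :=
  { liftOfCompatible (fun n => (conjι _ 𝔽 R n).comp (iterateFrobenius R p (d * n)))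
      (conjι_iterateFrobenius_compatible p d) with
    commutes' := fun c => by
      show conjι _ 𝔽 R 0 (algebraMap 𝔽 R c ^ p ^ (d * 0)) = _
      rw [mul_zero, pow_zero, pow_one, conjι_zero, ι_algebraMap] }

theorem ofPerfectClosure_mk (n : ℕ) (x : R) :
    ofPerfectClosure 𝔽 R p d (mk R p (n, x)) = conjι _ 𝔽 R n (x ^ p ^ (d * n)) :=
  liftOfCompatible_mk _ _ n x

theorem ofPerfectClosure_of (a : R) : ofPerfectClosure 𝔽 R p d (of R p a) = ι _ 𝔽 R a := by
  rw [of_apply, ofPerfectClosure_mk, mul_zero, pow_zero, pow_one, conjι_zero]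

theorem T_mul_ofPerfectClosure (u : PerfectClosure R p) :
    T _ 𝔽 R * ofPerfectClosure 𝔽 R p d u =
      ofPerfectClosure 𝔽 R p d (u ^ p ^ (d + 1)) * T _ 𝔽 R := by
  obtain ⟨⟨n, x⟩, rfl⟩ := mk_surjective R p u
  rw [map_pow, ofPerfectClosure_mk, T_mul_conjι]

theorem map_ofPerfectClosure (u : PerfectClosure R p) :
    map (ofAlgHom R p) (ofPerfectClosure 𝔽 R p d u) = ι _ 𝔽 (PerfectClosure R p) u := by
  obtain ⟨⟨n, x⟩, rfl⟩ := mk_surjective R p u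
  have hroot : of R p (x ^ p ^ (d * n)) = mk R p (n, x) ^ (p ^ (d + 1)) ^ n := by
    rw [map_pow, ← mk_pow_pow_self n x, ← pow_mul, ← pow_mul, ← pow_add]
    ring_nf
  rw [ofPerfectClosure_mk, map_conjι, ofAlgHom_apply, hroot, conjι_pow_pow_self]

variable (𝔽 R) in
noncomputable def perfectClosureEquiv :
    Ring' (p ^ (d + 1)) 𝔽 R ≃ₐ[𝔽] Ring' (p ^ (d + 1)) 𝔽 (PerfectClosure R p) :=
  AlgEquiv.ofAlgHom (map (ofAlgHom R p))
    (lift (ofPerfectClosure 𝔽 R p d) (unitT _ 𝔽 R) (T_mul_ofPerfectClosure p d))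
    (algHom_ext (fun u => by simp [map_ofPerfectClosure]) (by simp))
    (algHom_ext (fun a => by simp [ofPerfectClosure_of]) (by simp))

end PerfectClosure

end TwistedLaurent

open TwistedLaurent in
theorem stmt_4_general (p : ℕ) [Fact p.Prime] (e : ℕ) (he : 0 < e) (q : ℕ) (hq : q = p ^ e)
    (𝔽 : Type) [Field 𝔽]
    (R : Type) [CommRing R] [Algebra 𝔽 R] [CharP R p] :
    letI : Algebra 𝔽 (PerfectClosure R p) :=
      ((PerfectClosure.of R p).comp (algebraMap 𝔽 R)).toAlgebra
    ∃ g : Ring' q 𝔽 R →+* Ring' q 𝔽 (PerfectClosure R p),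
      (∀ a : R, g (ι q 𝔽 R a) = ι q 𝔽 (PerfectClosure R p) (PerfectClosure.of R p a)) ∧
      g (T q 𝔽 R) = T q 𝔽 (PerfectClosure R p) ∧
      g (S q 𝔽 R) = S q 𝔽 (PerfectClosure R p) ∧
      Function.Bijective g := by
  obtain ⟨d, rfl⟩ := Nat.exists_eq_add_one_of_ne_zero he.ne'
  subst hq
  exact ⟨perfectClosureEquiv 𝔽 R p d, fun a => map_ι _ a, map_T _, map_S _,
    (perfectClosureEquiv 𝔽 R p d).bijective⟩

open TwistedLaurent in
/-- Let `𝔽` be the finite field with `q` elements (`q = p^e`, `p` prime) and `R`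
a commutative `𝔽`-algebra.  The canonical ring homomorphism `R[τ,τ⁻¹] → R^perf[τ,τ⁻¹]` induced by
the canonical map `R → R^perf` to the perfection (perfect closure), sending `τ` to `τ` and `σ` to
`σ`, is bijective, i.e. an isomorphism of rings. -/
theorem stmt_4 (p : ℕ) [Fact p.Prime] (e : ℕ) (he : 0 < e) (q : ℕ) (hq : q = p ^ e)
    (𝔽 : Type) [Field 𝔽] [Fintype 𝔽] (hcard : Fintype.card 𝔽 = q)
    (R : Type) [CommRing R] [Algebra 𝔽 R] [CharP R p] :
    letI : Algebra 𝔽 (PerfectClosure R p) :=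
      ((PerfectClosure.of R p).comp (algebraMap 𝔽 R)).toAlgebra
    ∃ g : Ring' q 𝔽 R →+* Ring' q 𝔽 (PerfectClosure R p),
      (∀ a : R, g (ι q 𝔽 R a) = ι q 𝔽 (PerfectClosure R p) (PerfectClosure.of R p a)) ∧
      g (T q 𝔽 R) = T q 𝔽 (PerfectClosure R p) ∧
      g (S q 𝔽 R) = S q 𝔽 (PerfectClosure R p) ∧
      Function.Bijective g :=
  stmt_4_general p e he q hq 𝔽 R
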